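/- arXiv:2503.01110 — 2 statements merged into one kernel-verified Lean document; each statement's English description precedes it below -/
import Mathlib

section
/- Let f : ℤ^n → ℝ ∪ {+∞} be an M-convex function with bounded dom f, and let R ⊆ N with ∅ ≠ R ⊊ N. Then for an integer k, there exists x ∈ dom f with x(R) = k if and only if k̲ ≤ k ≤ k̄, where k̲ = min{x(R) : x ∈ dom f} and k̄ = max{x(R) : x ∈ dom f}. -/
noncomputable section

open scoped BigOperators

/-- The `i`-th unit vector in `ℤ^n`. -/
def chi {n : ℕ} (i : Fin n) : Fin n → ℤ := fun k => if k = i then 1 else 0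

/-- The function never takes the value `-∞`, i.e. its codomain is `ℝ ∪ {+∞}`. -/
def NoBot {n : ℕ} (f : (Fin n → ℤ) → EReal) : Prop := ∀ x, f x ≠ ⊥

/-- M-convexity: nonempty effective domain together with the exchange axiom (M-EXC). -/
def MConvexFn {n : ℕ} (f : (Fin n → ℤ) → EReal) : Prop :=
  (∃ x, f x ≠ ⊤) ∧
  ∀ x y : Fin n → ℤ, f x ≠ ⊤ → f y ≠ ⊤ →
    ∀ i : Fin n, y i < x i →
      ∃ j : Fin n, x j < y j ∧
        f (x - chi i + chi j) + f (y + chi i - chi j) ≤ f x + f y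

/-- The slopeZ `f'(x; i, j) = f(x + χ_i - χ_j) - f(x)`. -/
def slopeZ {n : ℕ} (f : (Fin n → ℤ) → EReal) (x : Fin n → ℤ) (i j : Fin n) : EReal :=
  f (x + chi i - chi j) - f x

/-- `φ(x) = min_{i, j ∈ N} f'(x; i, j)`. -/
def phi {n : ℕ} (f : (Fin n → ℤ) → EReal) (x : Fin n → ℤ) : EReal :=
  ⨅ i : Fin n, ⨅ j : Fin n, slopeZ f x i j

/-- Bounded effective domain. -/
def BddDom {n : ℕ} (f : (Fin n → ℤ) → EReal) : Prop :=
  ∃ C : ℤ, ∀ x : Fin n → ℤ, f x ≠ ⊤ → ∀ i, |x i| ≤ C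

/-- `x(R) = Σ_{i ∈ R} x(i)`. -/
def sumR {n : ℕ} (R : Finset (Fin n)) (x : Fin n → ℤ) : ℤ := ∑ i ∈ R, x i

/-- `k̲ = min { x(R) : x ∈ dom f }`. -/
def kmin {n : ℕ} (f : (Fin n → ℤ) → EReal) (R : Finset (Fin n)) : ℤ :=
  sInf {r : ℤ | ∃ x, f x ≠ ⊤ ∧ sumR R x = r}

/-- `k̄ = max { x(R) : x ∈ dom f }`. -/
def kmax {n : ℕ} (f : (Fin n → ℤ) → EReal) (R : Finset (Fin n)) : ℤ :=
  sSup {r : ℤ | ∃ x, f x ≠ ⊤ ∧ sumR R x = r}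

/-- `M(k)`: the set of minimizers of `f` over `{x ∈ dom f : x(R) = k}`. -/
def Mset {n : ℕ} (f : (Fin n → ℤ) → EReal) (R : Finset (Fin n)) (k : ℤ) :
    Set (Fin n → ℤ) :=
  {x | f x ≠ ⊤ ∧ sumR R x = k ∧ ∀ y : Fin n → ℤ, f y ≠ ⊤ → sumR R y = k → f x ≤ f y}

/-- `z(k) = min { f(x) : x ∈ dom f, x(R) = k }`. -/
def zval {n : ℕ} (f : (Fin n → ℤ) → EReal) (R : Finset (Fin n)) (k : ℤ) : EReal :=
  ⨅ (x : Fin n → ℤ) (_ : f x ≠ ⊤ ∧ sumR R x = k), f x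

/-- `φ^R(x) = min { f'(x; i, j) : i ∈ R, j ∈ N ∖ R }`. -/
def phiR {n : ℕ} (f : (Fin n → ℤ) → EReal) (R : Finset (Fin n)) (x : Fin n → ℤ) : EReal :=
  ⨅ i ∈ R, ⨅ j ∈ Rᶜ, slopeZ f x i j

/-
The values x(R), x ∈ dom f, form an interval of integers. Given x, y ∈ dom f with
x(R) < y(R), pick i ∈ R with x(i) < y(i); the exchange axiom applied to y, x and i moves
x to x + χ_i - χ_j ∈ dom f for some j with y(j) < x(j). If j ∉ R this point has R-sum
x(R) + 1; otherwise it has R-sum x(R) and is strictly closer to y on R, so we repeat. Since dom f is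
bounded, this interval is finite, with ends k̲ and k̄.
-/

lemma add_chi_sub_chi_apply {n : ℕ} (x : Fin n → ℤ) (i j k : Fin n) :
    (x + chi i - chi j) k = x k + (if k = i then 1 else 0) - (if k = j then 1 else 0) :=
  rfl

lemma sumR_add_chi_sub_chi {n : ℕ} (R : Finset (Fin n)) (x : Fin n → ℤ) (i j : Fin n) :
    sumR R (x + chi i - chi j)
      = sumR R x + (if i ∈ R then 1 else 0) - (if j ∈ R then 1 else 0) := by
  simp [sumR, chi, Finset.sum_add_distrib, Finset.sum_sub_distrib]

lemma sum_toNat_sub_add_chi_sub_chi_lt {n : ℕ} {R : Finset (Fin n)} {x y : Fin n → ℤ}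
    {i j : Fin n} (hiR : i ∈ R) (hi : x i < y i) (hj : y j < x j) :
    ∑ k ∈ R, (y k - (x + chi i - chi j) k).toNat < ∑ k ∈ R, (y k - x k).toNat := by
  refine Finset.sum_lt_sum (fun k _ => ?_) ⟨i, hiR, ?_⟩ <;>
    · rw [add_chi_sub_chi_apply]
      split_ifs <;> subst_vars <;> omega

lemma MConvexFn.exists_add_chi_sub_chi_ne_top {n : ℕ} {f : (Fin n → ℤ) → EReal}
    (hbot : NoBot f) (hM : MConvexFn f) {x y : Fin n → ℤ} (hx : f x ≠ ⊤) (hy : f y ≠ ⊤)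
    {i : Fin n} (hi : x i < y i) :
    ∃ j, y j < x j ∧ f (x + chi i - chi j) ≠ ⊤ := by
  obtain ⟨j, hj, hle⟩ := hM.2 y x hy hx i hi
  refine ⟨j, hj, fun htop => ?_⟩
  rw [htop, EReal.add_top_of_ne_bot (hbot _)] at hle
  exact (EReal.add_lt_top hy hx).not_ge hle

lemma MConvexFn.exists_sumR_eq_add_one {n : ℕ} {f : (Fin n → ℤ) → EReal}
    (hbot : NoBot f) (hM : MConvexFn f) (R : Finset (Fin n)) {x y : Fin n → ℤ}
    (hx : f x ≠ ⊤) (hy : f y ≠ ⊤) (hlt : sumR R x < sumR R y) :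
    ∃ z, f z ≠ ⊤ ∧ sumR R z = sumR R x + 1 := by
  obtain ⟨d, hd⟩ : ∃ d, ∑ k ∈ R, (y k - x k).toNat = d := ⟨_, rfl⟩
  induction d using Nat.strong_induction_on generalizing x with
  | _ d ih =>
  obtain ⟨i, hiR, hi⟩ := Finset.exists_lt_of_sum_lt hlt
  obtain ⟨j, hj, hx'⟩ := hM.exists_add_chi_sub_chi_ne_top hbot hx hy hi
  by_cases hjR : j ∈ R
  · have hsum : sumR R (x + chi i - chi j) = sumR R x := by
      simp [sumR_add_chi_sub_chi, hiR, hjR]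
    obtain ⟨z, hz, hzR⟩ :=
      ih _ (hd ▸ sum_toNat_sub_add_chi_sub_chi_lt hiR hi hj) hx' (hsum ▸ hlt) rfl
    exact ⟨z, hz, hsum ▸ hzR⟩
  · exact ⟨_, hx', by simp [sumR_add_chi_sub_chi, hiR, hjR]⟩

lemma Int.ordConnected_of_add_one_mem {S : Set ℤ}
    (h : ∀ a ∈ S, ∀ b ∈ S, a < b → a + 1 ∈ S) : S.OrdConnected := by
  refine ⟨fun a ha b hb c hc => ?_⟩
  obtain ⟨hac, hcb⟩ := hc
  induction c, hac using Int.leInduction with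
  | base => exact ha
  | succ c _ ih => exact h c (ih (by omega)) b hb (by omega)

def sumRValues {n : ℕ} (f : (Fin n → ℤ) → EReal) (R : Finset (Fin n)) : Set ℤ :=
  {r : ℤ | ∃ x, f x ≠ ⊤ ∧ sumR R x = r}

lemma MConvexFn.sumRValues_nonempty {n : ℕ} {f : (Fin n → ℤ) → EReal} (hM : MConvexFn f)
    (R : Finset (Fin n)) : (sumRValues f R).Nonempty :=
  let ⟨x, hx⟩ := hM.1
  ⟨sumR R x, x, hx, rfl⟩

lemma MConvexFn.sumRValues_ordConnected {n : ℕ} {f : (Fin n → ℤ) → EReal}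
    (hbot : NoBot f) (hM : MConvexFn f) (R : Finset (Fin n)) :
    (sumRValues f R).OrdConnected := by
  refine Int.ordConnected_of_add_one_mem ?_
  rintro _ ⟨x, hx, rfl⟩ _ ⟨y, hy, rfl⟩ hlt
  obtain ⟨z, hz, hzR⟩ := hM.exists_sumR_eq_add_one hbot R hx hy hlt
  exact ⟨z, hz, hzR⟩

lemma BddDom.exists_sumRValues_subset_Icc {n : ℕ} {f : (Fin n → ℤ) → EReal}
    (hbdd : BddDom f) (R : Finset (Fin n)) : ∃ C, sumRValues f R ⊆ Set.Icc (-C) C := by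
  obtain ⟨C, hC⟩ := hbdd
  refine ⟨R.card • C, ?_⟩
  rintro _ ⟨x, hx, rfl⟩
  exact abs_le.1 <| (Finset.abs_sum_le_sum_abs _ _).trans <|
    Finset.sum_le_card_nsmul _ _ _ fun i _ => hC x hx i

theorem statement11_general {n : ℕ} (f : (Fin n → ℤ) → EReal)
    (hbot : NoBot f) (hM : MConvexFn f) (hbdd : BddDom f)
    (R : Finset (Fin n))
    (k : ℤ) :
    (∃ x : Fin n → ℤ, f x ≠ ⊤ ∧ sumR R x = k) ↔ kmin f R ≤ k ∧ k ≤ kmax f R := by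
  obtain ⟨C, hC⟩ := hbdd.exists_sumRValues_subset_Icc R
  have hIcc : sumRValues f R = Set.Icc (kmin f R) (kmax f R) :=
    ((hM.sumRValues_nonempty R).ordConnected_iff_of_bdd (bddBelow_Icc.mono hC)
      (bddAbove_Icc.mono hC)).1 (hM.sumRValues_ordConnected hbot R)
  exact Set.ext_iff.1 hIcc k

/-- Feasibility of the constrained problem: there exists `x ∈ dom f` with `x(R) = k`
iff `k̲ ≤ k ≤ k̄`. -/
theorem statement11 {n : ℕ} (hn : 1 ≤ n) (f : (Fin n → ℤ) → EReal)
    (hbot : NoBot f) (hM : MConvexFn f) (hbdd : BddDom f)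
    (R : Finset (Fin n)) (hR : R.Nonempty) (hRp : R ≠ Finset.univ)
    (k : ℤ) :
    (∃ x : Fin n → ℤ, f x ≠ ⊤ ∧ sumR R x = k) ↔ kmin f R ≤ k ∧ k ≤ kmax f R :=
  statement11_general f hbot hM hbdd R k
end
end

section
/- Let f : ℝ^n → ℝ ∪ {+∞} be a polyhedral M-convex function with bounded nonempty effective domain, and let c ∈ ℝ. Let y ∈ dom f, and let i, j ∈ N be distinct elements such that f'_ℝ(y; i, j) > c. Then for every k ∈ N ∖ {i, j} and every λ > 0 such that ŷ := y + λ(χ_i − χ_k) ∈ dom f, it holds that f'_ℝ(ŷ; i, j) ≥ f'_ℝ(y; i, j) > c. -/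
noncomputable section

open scoped BigOperators

/-- The `i`-th unit vector in `ℝ^n`. -/
def chiR {n : ℕ} (i : Fin n) : Fin n → ℝ := fun k => if k = i then 1 else 0

/-- The function never takes the value `-∞`, i.e. its codomain is `ℝ ∪ {+∞}`. -/
def NoBotR {n : ℕ} (f : (Fin n → ℝ) → EReal) : Prop := ∀ x, f x ≠ ⊥

/-- `f` is polyhedral convex: its epigraph is a nonempty intersection of finitely many
closed affine halfspaces. -/
def PolyhedralConvex {n : ℕ} (f : (Fin n → ℝ) → EReal) : Prop :=
  (∃ (x : Fin n → ℝ) (t : ℝ), f x ≤ (t : EReal)) ∧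
  ∃ (m : ℕ) (a : Fin m → Fin n → ℝ) (b c : Fin m → ℝ),
    ∀ (x : Fin n → ℝ) (t : ℝ),
      f x ≤ (t : EReal) ↔ ∀ k : Fin m, (∑ i, a k i * x i) + b k * t ≤ c k

/-- The exchange axiom (M-EXC[ℝ]). -/
def MExcR {n : ℕ} (f : (Fin n → ℝ) → EReal) : Prop :=
  ∀ x y : Fin n → ℝ, f x ≠ ⊤ → f y ≠ ⊤ →
    ∀ i : Fin n, y i < x i →
      ∃ j : Fin n, x j < y j ∧ ∃ ε₀ : ℝ, 0 < ε₀ ∧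
        ∀ ε : ℝ, 0 ≤ ε → ε ≤ ε₀ →
          f (x - ε • (chiR i - chiR j)) + f (y + ε • (chiR i - chiR j)) ≤ f x + f y

/-- Polyhedral M-convex function. -/
def PolyMConvex {n : ℕ} (f : (Fin n → ℝ) → EReal) : Prop :=
  PolyhedralConvex f ∧ MExcR f

/-- The directional derivative `f'_ℝ(x; i, j) = lim_{α ↓ 0} (f(x + α(χ_i - χ_j)) - f(x))/α`.
For a (polyhedral) convex function the difference quotient is nondecreasing in `α`, so the
limit equals the infimum of the difference quotients over `α > 0`. -/
def slopeR {n : ℕ} (f : (Fin n → ℝ) → EReal) (x : Fin n → ℝ) (i j : Fin n) : EReal :=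
  ⨅ α : {a : ℝ // 0 < a}, (f (x + α.1 • (chiR i - chiR j)) - f x) * (((α.1)⁻¹ : ℝ) : EReal)

/-- `φ_ℝ(x) = min_{i, j ∈ N} f'_ℝ(x; i, j)`. -/
def phiRp {n : ℕ} (f : (Fin n → ℝ) → EReal) (x : Fin n → ℝ) : EReal :=
  ⨅ i : Fin n, ⨅ j : Fin n, slopeR f x i j

/-- Bounded effective domain. -/
def BddDomR {n : ℕ} (f : (Fin n → ℝ) → EReal) : Prop :=
  ∃ C : ℝ, ∀ x : Fin n → ℝ, f x ≠ ⊤ → ∀ i, |x i| ≤ C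


/-!
Moving from `y` to a point `z` that is larger only in coordinate `i` can only increase the
slope in direction `χ_i - χ_j`. Fix `r` below the slope at `y` and `α > 0`, and let `S` be the
set of `t ≥ 0` with `f(z + t d) ≤ f(z + α d) - (α - t) r`, where `d = χ_i - χ_j`. It contains
`α` and is closed because the epigraph of a polyhedral function is. If `t > 0` lies in `S`,
then `z + t d` is below `y` in coordinate `j` and nowhere above it except at `i`, so the exchange
axiom must trade along `χ_i - χ_j`: for small `ε`,
`f(y + ε d) + f(z + (t - ε) d) ≤ f(y) + f(z + t d)`, and since `f(y + ε d) ≥ f(y) + ε r` this puts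
`t - ε` in `S`. Hence `0 ∈ S`, i.e. `f(z + α d) - f(z) ≥ α r`.
-/

open Set

variable {n : ℕ} {f : (Fin n → ℝ) → EReal}

theorem NoBotR.exists_eq_coe (hbot : NoBotR f) {x : Fin n → ℝ} (hx : f x ≠ ⊤) :
    ∃ B : ℝ, f x = B :=
  ⟨(f x).toReal, (EReal.coe_toReal hx (hbot x)).symm⟩

theorem PolyhedralConvex.isClosed_epigraph (hf : PolyhedralConvex f) :
    IsClosed {p : (Fin n → ℝ) × ℝ | f p.1 ≤ p.2} := by
  obtain ⟨-, m, a, b, c, hepi⟩ := hf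
  have : {p : (Fin n → ℝ) × ℝ | f p.1 ≤ p.2} =
      ⋂ k, {p | (∑ l, a k l * p.1 l) + b k * p.2 ≤ c k} := by
    ext p
    simp only [mem_ofPred_eq, mem_iInter, hepi]
  rw [this]
  exact isClosed_iInter fun k => isClosed_le (by fun_prop) continuous_const

theorem add_smul_chiR_sub_chiR_apply_le (x : Fin n → ℝ) {t : ℝ} (ht : 0 ≤ t) {i l : Fin n}
    (hl : l ≠ i) (j : Fin n) : (x + t • (chiR i - chiR j)) l ≤ x l := by
  simp only [Pi.add_apply, Pi.smul_apply, Pi.sub_apply, chiR, if_neg hl, smul_eq_mul]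
  split_ifs <;> linarith

theorem add_smul_chiR_sub_chiR_apply_right (x : Fin n → ℝ) (t : ℝ) {i j : Fin n} (hij : i ≠ j) :
    (x + t • (chiR i - chiR j)) j = x j - t := by
  simp [chiR, hij.symm]
  ring

theorem EReal.coe_le_sub_coe_mul_inv_iff {F : EReal} {B r α : ℝ} (hα : 0 < α) :
    (r : EReal) ≤ (F - B) * ((α⁻¹ : ℝ) : EReal) ↔ ((B + α * r : ℝ) : EReal) ≤ F := by
  induction F using EReal.rec with
  | bot =>
    simp only [EReal.bot_sub, EReal.bot_mul_coe_of_pos (inv_pos.2 hα), le_bot_iff,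
      EReal.coe_ne_bot]
  | coe F =>
    norm_cast
    rw [← div_eq_mul_inv, le_div_iff₀ hα]
    constructor <;> intro h <;> linarith
  | top => simp [EReal.top_mul_coe_of_pos (inv_pos.2 hα)]

theorem coe_le_slopeR_iff {x : Fin n → ℝ} {B : ℝ} (hx : f x = B) (i j : Fin n) (r : ℝ) :
    (r : EReal) ≤ slopeR f x i j ↔
      ∀ α : ℝ, 0 < α → ((B + α * r : ℝ) : EReal) ≤ f (x + α • (chiR i - chiR j)) := by
  simp only [slopeR, le_iInf_iff, Subtype.forall, hx]
  exact forall₂_congr fun α hα => EReal.coe_le_sub_coe_mul_inv_iff hα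

theorem MExcR.exists_add_sub_le (hf : MExcR f) {x z : Fin n → ℝ} {i j : Fin n}
    (hx : f x ≠ ⊤) (hz : f z ≠ ⊤) (hj : z j < x j) (hzx : ∀ l, l ≠ i → z l ≤ x l) :
    ∃ ε₀ : ℝ, 0 < ε₀ ∧ ∀ ε : ℝ, 0 ≤ ε → ε ≤ ε₀ →
      f (x + ε • (chiR i - chiR j)) + f (z - ε • (chiR i - chiR j)) ≤ f x + f z := by
  obtain ⟨l, hl, ε₀, hε₀, hexc⟩ := hf x z hx hz j hj
  obtain rfl : l = i := by_contra fun hli => (hzx l hli).not_gt hl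
  refine ⟨ε₀, hε₀, fun ε hε hεε₀ => ?_⟩
  have := hexc ε hε hεε₀
  rwa [← neg_sub (chiR l), smul_neg, sub_neg_eq_add, ← sub_eq_add_neg] at this

theorem zero_mem_of_isClosed_of_exists_lt {S : Set ℝ} (hS : IsClosed S) (hne : S.Nonempty)
    (hnonneg : ∀ t ∈ S, 0 ≤ t) (hdesc : ∀ t ∈ S, 0 < t → ∃ s ∈ S, s < t) : 0 ∈ S := by
  have hbdd : BddBelow S := ⟨0, hnonneg⟩
  have hinf := hS.csInf_mem hne hbdd
  obtain h | h := (hnonneg _ hinf).eq_or_lt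
  · rwa [← h] at hinf
  · obtain ⟨s, hs, hlt⟩ := hdesc _ hinf h
    exact absurd (csInf_le hbdd hs) hlt.not_ge

theorem le_sub_mul_of_lt_slopeR (hcl : IsClosed {p : (Fin n → ℝ) × ℝ | f p.1 ≤ p.2})
    (hexc : MExcR f) {y z : Fin n → ℝ} {B : ℝ} (hy : f y = B) {i j : Fin n} (hij : i ≠ j)
    (hzy : ∀ l, l ≠ i → z l ≤ y l) {r : ℝ} (hr : (r : EReal) < slopeR f y i j)
    {α A : ℝ} (hα : 0 < α) (hA : f (z + α • (chiR i - chiR j)) = A) :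
    f z ≤ ((A - α * r : ℝ) : EReal) := by
  set d := chiR i - chiR j
  let S := {t : ℝ | 0 ≤ t ∧ f (z + t • d) ≤ ((A - (α - t) * r : ℝ) : EReal)}
  suffices h : 0 ∈ S by simpa using h.2
  refine zero_mem_of_isClosed_of_exists_lt
    (isClosed_Ici.inter (hcl.preimage (by fun_prop : Continuous fun t : ℝ =>
      (z + t • d, A - (α - t) * r))))
    ⟨α, hα.le, by simp [hA]⟩ (fun t ht => ht.1) ?_
  rintro t ⟨-, ht⟩ htpos
  have hzt : f (z + t • d) ≠ ⊤ := ne_top_of_le_ne_top (EReal.coe_ne_top _) ht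
  obtain ⟨ε₀, hε₀, hexch⟩ := hexc.exists_add_sub_le (hy ▸ EReal.coe_ne_top B) hzt
    (by rw [add_smul_chiR_sub_chiR_apply_right _ _ hij]; linarith [hzy j hij.symm])
    (fun l hl => (add_smul_chiR_sub_chiR_apply_le z htpos.le hl j).trans (hzy l hl))
  set ε := min ε₀ t
  have hε : 0 < ε := lt_min hε₀ htpos
  refine ⟨t - ε, ⟨sub_nonneg.2 (min_le_right _ _), ?_⟩, sub_lt_self _ hε⟩
  have hsum := hexch ε hε.le (min_le_left _ _)
  rw [add_sub_assoc, ← sub_smul] at hsum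
  have hlow := (coe_le_slopeR_iff hy i j r).1 hr.le ε hε
  have key : ((B + ε * r : ℝ) : EReal) + f (z + (t - ε) • d) ≤
      ((B + (A - (α - t) * r) : ℝ) : EReal) := calc
    _ ≤ f (y + ε • d) + f (z + (t - ε) • d) := add_le_add_left hlow _
    _ ≤ f y + f (z + t • d) := hsum
    _ ≤ _ := by rw [hy, EReal.coe_add]; exact add_le_add_right ht _
  calc f (z + (t - ε) • d)
      ≤ ((B + (A - (α - t) * r) : ℝ) : EReal) - ((B + ε * r : ℝ) : EReal) := by
        rw [EReal.le_sub_iff_add_le (.inl (EReal.coe_ne_bot _)) (.inl (EReal.coe_ne_top _)),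
          add_comm]
        exact key
    _ = ((A - (α - (t - ε)) * r : ℝ) : EReal) := by
        rw [← EReal.coe_sub]
        congr 1
        ring

theorem slopeR_le_slopeR_of_forall_ne_le (hcl : IsClosed {p : (Fin n → ℝ) × ℝ | f p.1 ≤ p.2})
    (hexc : MExcR f) (hbot : NoBotR f) {y z : Fin n → ℝ} (hy : f y ≠ ⊤) (hz : f z ≠ ⊤)
    {i j : Fin n} (hij : i ≠ j) (hzy : ∀ l, l ≠ i → z l ≤ y l) :
    slopeR f y i j ≤ slopeR f z i j := by
  obtain ⟨B, hB⟩ := hbot.exists_eq_coe hy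
  obtain ⟨C, hC⟩ := hbot.exists_eq_coe hz
  refine EReal.ge_of_forall_gt_iff_ge.1 fun r hr => (coe_le_slopeR_iff hC i j r).2 fun α hα => ?_
  obtain hA | hA := eq_or_ne (f (z + α • (chiR i - chiR j))) ⊤
  · exact hA ▸ le_top
  obtain ⟨A, hA⟩ := hbot.exists_eq_coe hA
  have := le_sub_mul_of_lt_slopeR hcl hexc hB hij hzy hr hα hA
  rw [hC, EReal.coe_le_coe_iff] at this
  rw [hA, EReal.coe_le_coe_iff]
  linarith

theorem statement17_general {n : ℕ} (f : (Fin n → ℝ) → EReal)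
    (hbot : NoBotR f) (hM : PolyMConvex f) (c : ℝ)
    (y : Fin n → ℝ) (hy : f y ≠ ⊤)
    (i j : Fin n) (hij : i ≠ j) (hd : (c : EReal) < slopeR f y i j)
    (k : Fin n)
    (lam : ℝ) (hlam : 0 < lam)
    (hdom : f (y + lam • (chiR i - chiR k)) ≠ ⊤) :
    slopeR f y i j ≤ slopeR f (y + lam • (chiR i - chiR k)) i j ∧
      (c : EReal) < slopeR f (y + lam • (chiR i - chiR k)) i j := by
  have hmono : slopeR f y i j ≤ slopeR f (y + lam • (chiR i - chiR k)) i j :=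
    slopeR_le_slopeR_of_forall_ne_le hM.1.isClosed_epigraph hM.2 hbot hy hdom hij
      fun l hl => add_smul_chiR_sub_chiR_apply_le y hlam.le hl k
  exact ⟨hmono, hd.trans_le hmono⟩

/-- If `f'_ℝ(y; i, j) > c` and `ŷ = y + λ(χ_i - χ_k) ∈ dom f` for some `k ∉ {i, j}` and
`λ > 0`, then `f'_ℝ(ŷ; i, j) ≥ f'_ℝ(y; i, j) > c`. -/
theorem statement17 {n : ℕ} (hn : 1 ≤ n) (f : (Fin n → ℝ) → EReal)
    (hbot : NoBotR f) (hM : PolyMConvex f) (hbdd : BddDomR f) (c : ℝ)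
    (y : Fin n → ℝ) (hy : f y ≠ ⊤)
    (i j : Fin n) (hij : i ≠ j) (hd : (c : EReal) < slopeR f y i j)
    (k : Fin n) (hki : k ≠ i) (hkj : k ≠ j)
    (lam : ℝ) (hlam : 0 < lam)
    (hdom : f (y + lam • (chiR i - chiR k)) ≠ ⊤) :
    slopeR f y i j ≤ slopeR f (y + lam • (chiR i - chiR k)) i j ∧
      (c : EReal) < slopeR f (y + lam • (chiR i - chiR k)) i j :=
  statement17_general f hbot hM c y hy i j hij hd k lam hlam hdom
end
end
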